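/- Let μ be a Borel probability measure on ℝ^N with finite second moment whose support has at least k points, and let (z_1,...,z_k) be a minimizer of the k-means functional F_{μ,k}. If V_i = {x ∈ ℝ^N : |x - z_i| = min_j |x - z_j|} are the closed Voronoi cells, then μ(V_i ∩ V_j) = 0 for all i ≠ j. -/

import Mathlib

/-!
Two consequences of minimality. First, the centers are distinct: if two of them coincide, moving
one to a point of the support that is not a center strictly lowers the cost. Second, since
`p ↦ ∫_C ‖x - p‖²` is minimal exactly where `μ(C) p = ∫_C x`, a center `z_l` satisfies
`μ(C) z_l = ∫_C x` for every measurable `C ⊆ V_l` whose complement is covered by the other cells.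
Applied to `C = V_i` and `C = V_i \ V_j` this gives `μ(V_i ∩ V_j) z_i = ∫_{V_i ∩ V_j} x`, and by
symmetry the same holds for `z_j`; hence `μ(V_i ∩ V_j) (z_i - z_j) = 0`.
-/

open MeasureTheory

/-- The support of a Borel measure: points all of whose neighborhoods have positive measure. -/
def measSupport {N : ℕ} (μ : Measure (EuclideanSpace ℝ (Fin N))) :
    Set (EuclideanSpace ℝ (Fin N)) :=
  {x | ∀ ε > 0, 0 < μ (Metric.ball x ε)}

open Set Function Metric

theorem injective_of_card_le_encard_range {ι α : Type*} [Finite ι] {f : ι → α}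
    (h : ENat.card ι ≤ (range f).encard) : Injective f := by
  have hcard : Nat.card ι ≤ Nat.card (range f) := by
    rwa [encard, ENat.card_eq_coe_natCard, ENat.card_eq_coe_natCard, Nat.cast_le] at h
  exact fun a b hab => (rangeFactorization_surjective.bijective_of_nat_card_le hcard).1
    (Subtype.ext hab)

section SecondMoment

variable {E : Type*} [NormedAddCommGroup E] [MeasurableSpace E] [OpensMeasurableSpace E]
  [SecondCountableTopology E] {ν : Measure E}

theorem memLp_two_id_of_integrable_norm_sq (h2 : Integrable (fun x => ‖x‖ ^ 2) ν) :
    MemLp id 2 ν :=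
  (memLp_two_iff_integrable_sq_norm aestronglyMeasurable_id).2 h2

theorem integrable_norm_sub_sq [IsFiniteMeasure ν] (h2 : Integrable (fun x => ‖x‖ ^ 2) ν)
    (p : E) : Integrable (fun x => ‖x - p‖ ^ 2) ν :=
  ((memLp_two_id_of_integrable_norm_sq h2).sub (memLp_const p)).integrable_norm_pow two_ne_zero

theorem integrable_of_integrable_norm_sq [IsFiniteMeasure ν]
    (h2 : Integrable (fun x => ‖x‖ ^ 2) ν) : Integrable (fun x : E => x) ν :=
  (memLp_two_id_of_integrable_norm_sq h2).integrable one_le_two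

variable [InnerProductSpace ℝ E] [CompleteSpace E] [IsFiniteMeasure ν]

theorem integral_norm_sub_sq_eq_add (h2 : Integrable (fun x => ‖x‖ ^ 2) ν) (p : E) :
    ∫ x, ‖x - p‖ ^ 2 ∂ν =
      ∫ x, ‖x - ⨍ y, y ∂ν‖ ^ 2 ∂ν + ν.real univ * ‖(⨍ y, y ∂ν) - p‖ ^ 2 := by
  set c := ⨍ y, y ∂ν
  have hid := integrable_of_integrable_norm_sq h2
  have hexpand : (fun x => ‖x - p‖ ^ 2) =
      fun x => ‖x - c‖ ^ 2 + (2 * inner ℝ (c - p) (x - c) + ‖c - p‖ ^ 2) := by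
    ext x
    rw [← add_assoc, real_inner_comm, ← norm_add_sq_real, sub_add_sub_cancel]
  have hdev : Integrable (fun x => x - c) ν := hid.sub (integrable_const c)
  have hmean : ∫ x, (x - c) ∂ν = 0 := by
    rw [integral_sub hid (integrable_const c), integral_const, measure_smul_average, sub_self]
  have hcross : ∫ x, (2 * inner ℝ (c - p) (x - c) + ‖c - p‖ ^ 2) ∂ν =
      ν.real univ * ‖c - p‖ ^ 2 := by
    rw [integral_add ((hdev.const_inner _).const_mul 2) (integrable_const _), integral_const_mul,
      integral_inner hdev, hmean, inner_zero_right, mul_zero, zero_add, integral_const, smul_eq_mul]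
  rw [hexpand, integral_add (integrable_norm_sub_sq h2 c), hcross]
  exact ((hdev.const_inner _).const_mul 2).add (integrable_const _)

theorem measureReal_univ_smul_eq_integral_of_isMinOn (h2 : Integrable (fun x => ‖x‖ ^ 2) ν)
    {z : E} (hz : IsMinOn (fun p => ∫ x, ‖x - p‖ ^ 2 ∂ν) univ z) :
    ν.real univ • z = ∫ x, x ∂ν := by
  rw [← measure_smul_average]
  have hle := isMinOn_univ_iff.1 hz (⨍ y, y ∂ν)
  rw [integral_norm_sub_sq_eq_add h2 z, add_le_iff_nonpos_right] at hle
  rcases measureReal_nonneg.eq_or_lt with h0 | hpos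
  · rw [← h0, zero_smul, zero_smul]
  · have : ‖(⨍ y, y ∂ν) - z‖ ^ 2 ≤ 0 := nonpos_of_mul_nonpos_right hle hpos
    rw [sq_nonpos_iff, norm_sub_eq_zero_iff] at this
    rw [this]

end SecondMoment

section Voronoi

variable {ι E : Type*} [PseudoMetricSpace E]

def voronoiCell (z : ι → E) (i : ι) : Set E := {x | dist x (z i) = ⨅ l, dist x (z l)}

noncomputable def kmeansCost [MeasurableSpace E] (μ : Measure E) (z : ι → E) : ℝ :=
  ∫ x, (⨅ i, dist x (z i)) ^ 2 ∂μ

abbrev IsKMeansMinimizer [MeasurableSpace E] (μ : Measure E) (z : ι → E) : Prop :=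
  ∀ w : ι → E, kmeansCost μ z ≤ kmeansCost μ w

variable [Finite ι]

theorem iInf_dist_le (z : ι → E) (x : E) (i : ι) : ⨅ l, dist x (z l) ≤ dist x (z i) :=
  ciInf_le (finite_range _).bddBelow i

theorem exists_mem_voronoiCell [Nonempty ι] (z : ι → E) (x : E) :
    ∃ i, x ∈ voronoiCell z i :=
  exists_eq_ciInf_of_finite

theorem exists_ne_mem_voronoiCell {z : ι → E} {x : E} {i : ι} (hx : x ∉ voronoiCell z i) :
    ∃ l ≠ i, x ∈ voronoiCell z l := by
  have : Nonempty ι := ⟨i⟩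
  obtain ⟨l, hl⟩ := exists_mem_voronoiCell z x
  exact ⟨l, fun h => hx (h ▸ hl), hl⟩

theorem iInf_dist_update_le [DecidableEq ι] {z : ι → E} {i j : ι} (hij : i ≠ j) (hz : z i = z j)
    (a x : E) : ⨅ l, dist x (update z j a l) ≤ ⨅ l, dist x (z l) := by
  have : Nonempty ι := ⟨i⟩
  refine le_ciInf fun l => ?_
  rcases eq_or_ne l j with rfl | hl
  · exact (iInf_dist_le _ x i).trans_eq (by rw [update_of_ne hij, hz])
  · exact (iInf_dist_le _ x l).trans_eq (by rw [update_of_ne hl])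

variable [MeasurableSpace E] [OpensMeasurableSpace E]

theorem measurable_iInf_dist (z : ι → E) : Measurable fun x => ⨅ i, dist x (z i) :=
  Measurable.iInf fun _ => (continuous_id.dist continuous_const).measurable

theorem measurableSet_voronoiCell (z : ι → E) (i : ι) : MeasurableSet (voronoiCell z i) :=
  measurableSet_eq_fun (continuous_id.dist continuous_const).measurable (measurable_iInf_dist z)

end Voronoi

section KMeans

variable {ι E : Type*} [Finite ι] [NormedAddCommGroup E] [MeasurableSpace E]
  [OpensMeasurableSpace E] [SecondCountableTopology E] {μ : Measure E} [IsFiniteMeasure μ]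
  {z : ι → E}

theorem integrable_iInf_dist_sq [Nonempty ι] (h2 : Integrable (fun x => ‖x‖ ^ 2) μ)
    (w : ι → E) : Integrable (fun x => (⨅ i, dist x (w i)) ^ 2) μ := by
  obtain ⟨i⟩ := ‹Nonempty ι›
  refine (integrable_norm_sub_sq h2 (w i)).mono'
    ((measurable_iInf_dist w).pow_const 2).aestronglyMeasurable (ae_of_all _ fun x => ?_)
  rw [Real.norm_eq_abs, abs_pow, abs_of_nonneg (Real.iInf_nonneg fun _ => dist_nonneg),
    ← dist_eq_norm]
  exact pow_le_pow_left₀ (Real.iInf_nonneg fun _ => dist_nonneg) (iInf_dist_le w x i) 2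

theorem kmeansCost_update_lt [DecidableEq ι] (h2 : Integrable (fun x => ‖x‖ ^ 2) μ) {i j : ι}
    (hij : i ≠ j) (hz : z i = z j) {a : E} (ha : ∀ ε > 0, 0 < μ (ball a ε)) (haz : a ∉ range z) :
    kmeansCost μ (update z j a) < kmeansCost μ z := by
  have : Nonempty ι := ⟨i⟩
  set w := update z j a with hw
  obtain ⟨l, hl⟩ := exists_eq_ciInf_of_finite (f := fun l => dist a (z l))
  set d := ⨅ l, dist a (z l)
  have hd : 0 < d := hl ▸ dist_pos.2 fun h => haz ⟨l, h.symm⟩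
  have hlt : ∀ x ∈ ball a (d / 2), ⨅ l, dist x (w l) < ⨅ l, dist x (z l) := by
    intro x hx
    rw [mem_ball] at hx
    calc ⨅ l, dist x (w l) ≤ dist x a := (iInf_dist_le w x j).trans_eq (by rw [hw, update_self])
      _ < d - dist x a := by linarith
      _ ≤ ⨅ l, dist x (z l) := le_ciInf fun m => by
          linarith [iInf_dist_le z a m, dist_triangle a x (z m), dist_comm a x]
  set f := fun x => (⨅ l, dist x (z l)) ^ 2 - (⨅ l, dist x (w l)) ^ 2
  have hf : 0 ≤ f := fun x => sub_nonneg.2 <|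
    pow_le_pow_left₀ (Real.iInf_nonneg fun _ => dist_nonneg) (iInf_dist_update_le hij hz a x) 2
  have hball : ball a (d / 2) ⊆ support f := fun x hx => (sub_pos.2 <|
    pow_lt_pow_left₀ (hlt x hx) (Real.iInf_nonneg fun _ => dist_nonneg) two_ne_zero).ne'
  have hfi := (integrable_iInf_dist_sq h2 z).sub (integrable_iInf_dist_sq h2 w)
  have hpos : 0 < ∫ x, f x ∂μ := (integral_pos_iff_support_of_nonneg hf hfi).2
    ((ha _ (half_pos hd)).trans_le (measure_mono hball))
  rw [integral_sub (integrable_iInf_dist_sq h2 z) (integrable_iInf_dist_sq h2 w)] at hpos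
  exact sub_pos.1 hpos

theorem IsKMeansMinimizer.injective (hmin : IsKMeansMinimizer μ z)
    (h2 : Integrable (fun x => ‖x‖ ^ 2) μ)
    (hsupp : ENat.card ι ≤ {a | ∀ ε > 0, 0 < μ (ball a ε)}.encard) : Injective z := by
  classical
  by_contra hz
  obtain ⟨i, j, hzij, hij⟩ := not_injective_iff.1 hz
  have hsub : {a | ∀ ε > 0, 0 < μ (ball a ε)} ⊆ range z := fun a ha => by_contra fun haz =>
    (hmin _).not_gt (kmeansCost_update_lt h2 hij hzij ha haz)
  exact hz (injective_of_card_le_encard_range (hsupp.trans (encard_le_encard hsub)))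

/-- Moving `z l` to `p` does not increase the cost outside `C`, where every point has another
nearest center. -/
theorem IsKMeansMinimizer.setIntegral_dist_sq_le (hmin : IsKMeansMinimizer μ z)
    (h2 : Integrable (fun x => ‖x‖ ^ 2) μ) {C : Set E} {l : ι} (hC : MeasurableSet C)
    (hCl : C ⊆ voronoiCell z l) (hcov : ∀ x ∉ C, ∃ i ≠ l, x ∈ voronoiCell z i) (p : E) :
    ∫ x in C, dist x (z l) ^ 2 ∂μ ≤ ∫ x in C, dist x p ^ 2 ∂μ := by
  classical
  have : Nonempty ι := ⟨l⟩
  set w := update z l p with hw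
  have hin : ∀ x ∈ C, (⨅ i, dist x (w i)) ^ 2 ≤ dist x p ^ 2 := fun x _ =>
    pow_le_pow_left₀ (Real.iInf_nonneg fun _ => dist_nonneg)
      ((iInf_dist_le w x l).trans_eq (by rw [hw, update_self])) 2
  have hout : ∀ x ∈ Cᶜ, (⨅ i, dist x (w i)) ^ 2 ≤ (⨅ i, dist x (z i)) ^ 2 := by
    intro x hx
    obtain ⟨i, hil, hxi⟩ := hcov x hx
    refine pow_le_pow_left₀ (Real.iInf_nonneg fun _ => dist_nonneg) ?_ 2
    calc ⨅ i, dist x (w i) ≤ dist x (w i) := iInf_dist_le w x i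
      _ = ⨅ i, dist x (z i) := by rw [hw, update_of_ne hil, hxi]
  have hz : kmeansCost μ z =
      ∫ x in C, dist x (z l) ^ 2 ∂μ + ∫ x in Cᶜ, (⨅ i, dist x (z i)) ^ 2 ∂μ := by
    rw [kmeansCost, ← integral_add_compl hC (integrable_iInf_dist_sq h2 z)]
    congr 1
    exact setIntegral_congr_fun hC fun x hx => by rw [← hCl hx]
  have hw : kmeansCost μ w ≤
      ∫ x in C, dist x p ^ 2 ∂μ + ∫ x in Cᶜ, (⨅ i, dist x (z i)) ^ 2 ∂μ := by
    rw [kmeansCost, ← integral_add_compl hC (integrable_iInf_dist_sq h2 w)]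
    have hp : Integrable (fun x => dist x p ^ 2) μ := by
      simpa only [dist_eq_norm] using integrable_norm_sub_sq h2 p
    exact add_le_add (setIntegral_mono_on (integrable_iInf_dist_sq h2 w).integrableOn
      hp.integrableOn hC hin) (setIntegral_mono_on (integrable_iInf_dist_sq h2 w).integrableOn
      (integrable_iInf_dist_sq h2 z).integrableOn hC.compl hout)
  linarith [hmin w]

variable [InnerProductSpace ℝ E] [CompleteSpace E]

theorem IsKMeansMinimizer.measureReal_smul_eq_setIntegral (hmin : IsKMeansMinimizer μ z)
    (h2 : Integrable (fun x => ‖x‖ ^ 2) μ) {C : Set E} {l : ι} (hC : MeasurableSet C)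
    (hCl : C ⊆ voronoiCell z l) (hcov : ∀ x ∉ C, ∃ i ≠ l, x ∈ voronoiCell z i) :
    μ.real C • z l = ∫ x in C, x ∂μ := by
  have hz : IsMinOn (fun p => ∫ x in C, ‖x - p‖ ^ 2 ∂μ) univ (z l) :=
    isMinOn_univ_iff.2 fun p => by
      simpa only [dist_eq_norm] using hmin.setIntegral_dist_sq_le h2 hC hCl hcov p
  rw [← measureReal_restrict_apply_univ]
  exact measureReal_univ_smul_eq_integral_of_isMinOn h2.restrict hz

theorem IsKMeansMinimizer.measureReal_inter_smul_eq_setIntegral (hmin : IsKMeansMinimizer μ z)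
    (h2 : Integrable (fun x => ‖x‖ ^ 2) μ) {i j : ι} (hij : i ≠ j) :
    μ.real (voronoiCell z i ∩ voronoiCell z j) • z i =
      ∫ x in voronoiCell z i ∩ voronoiCell z j, x ∂μ := by
  set Vi := voronoiCell z i
  set Vj := voronoiCell z j
  have hVi : MeasurableSet Vi := measurableSet_voronoiCell z i
  have hVj : MeasurableSet Vj := measurableSet_voronoiCell z j
  have hcell := hmin.measureReal_smul_eq_setIntegral h2 hVi subset_rfl
    fun x hx => exists_ne_mem_voronoiCell hx
  have hdiff := hmin.measureReal_smul_eq_setIntegral h2 (hVi.diff hVj) sdiff_subset fun x hx => by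
    by_cases hxi : x ∈ Vi
    · exact ⟨j, hij.symm, by simpa [hxi] using hx⟩
    · exact exists_ne_mem_voronoiCell hxi
  have hid := integrable_of_integrable_norm_sq h2
  calc μ.real (Vi ∩ Vj) • z i = μ.real Vi • z i - μ.real (Vi \ Vj) • z i := by
        rw [← sub_smul, ← measureReal_inter_add_sdiff (s := Vi) hVj, add_sub_cancel_right]
    _ = ∫ x in Vi ∩ Vj, x ∂μ := by
        rw [hcell, hdiff, ← integral_inter_add_sdiff hVj hid.integrableOn, add_sub_cancel_right]

end KMeans

theorem kmeans_voronoi_boundaries_null_general (N k : ℕ)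
    (μ : Measure (EuclideanSpace ℝ (Fin N))) [IsProbabilityMeasure μ]
    (h2 : Integrable (fun x => ‖x‖ ^ 2) μ)
    (hsupp : (k : ℕ∞) ≤ (measSupport μ).encard)
    (z : Fin k → EuclideanSpace ℝ (Fin N))
    (hmin : ∀ w : Fin k → EuclideanSpace ℝ (Fin N),
      ∫ x, (⨅ i, dist x (z i)) ^ 2 ∂μ ≤ ∫ x, (⨅ i, dist x (w i)) ^ 2 ∂μ) :
    ∀ i j : Fin k, i ≠ j →
      μ ({x | dist x (z i) = ⨅ l, dist x (z l)}
          ∩ {x | dist x (z j) = ⨅ l, dist x (z l)}) = 0 := by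
  intro i j hij
  have hz : IsKMeansMinimizer μ z := hmin
  have hinj : Injective z := hz.injective h2 (by simpa [measSupport] using hsupp)
  have hi := hz.measureReal_inter_smul_eq_setIntegral h2 hij
  have hj := hz.measureReal_inter_smul_eq_setIntegral h2 hij.symm
  rw [inter_comm] at hj
  have hS : μ.real (voronoiCell z i ∩ voronoiCell z j) • (z i - z j) = 0 := by
    rw [smul_sub, hi, hj, sub_self]
  rw [smul_eq_zero, sub_eq_zero] at hS
  exact (measureReal_eq_zero_iff).1 (hS.resolve_right (hinj.ne hij))

/-- If the support of `μ` has at least `k` points and `z` minimizes the k-means functional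
`F_{μ,k}`, then the boundaries between (closed) Voronoi cells `V_i` are `μ`-null:
`μ(V_i ∩ V_j) = 0` for `i ≠ j`. -/
theorem kmeans_voronoi_boundaries_null (N k : ℕ) (hk : 0 < k)
    (μ : Measure (EuclideanSpace ℝ (Fin N))) [IsProbabilityMeasure μ]
    (h2 : Integrable (fun x => ‖x‖ ^ 2) μ)
    (hsupp : (k : ℕ∞) ≤ (measSupport μ).encard)
    (z : Fin k → EuclideanSpace ℝ (Fin N))
    (hmin : ∀ w : Fin k → EuclideanSpace ℝ (Fin N),
      ∫ x, (⨅ i, dist x (z i)) ^ 2 ∂μ ≤ ∫ x, (⨅ i, dist x (w i)) ^ 2 ∂μ) :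
    ∀ i j : Fin k, i ≠ j →
      μ ({x | dist x (z i) = ⨅ l, dist x (z l)}
          ∩ {x | dist x (z j) = ⨅ l, dist x (z l)}) = 0 :=
  kmeans_voronoi_boundaries_null_general N k μ h2 hsupp z hmin
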